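/- Let C be a cotorsion R-module and let W be an n-th cosyzygy of C (i.e. there is an exact sequence 0 → C → E^0 → ⋯ → E^{n-1} → W → 0 with each E^i injective). Then W is L_n-injective. -/

import Mathlib

open CategoryTheory

/-- Flatness of a module over an arbitrary (possibly noncommutative) ring,
via the equational criterion: every relation is a consequence of trivial relations. -/
def IsFlatMod (R : Type) [Ring R] (M : Type) [AddCommGroup M] [Module R M] : Prop :=
  ∀ (ι : Type) (_ : Fintype ι) (r : ι → R) (x : ι → M),
    (∑ i, r i • x i = 0) →
      ∃ (κ : Type) (_ : Fintype κ) (a : ι → κ → R) (y : κ → M),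
        (∀ i, x i = ∑ j, a i j • y j) ∧ ∀ j, (∑ i, r i * a i j) = 0

variable (R : Type) [Ring R]

/-- `Ext^n_R(M, N) = 0`. -/
def extVanish (n : ℕ) (M N : ModuleCat.{0} R) : Prop :=
  Subsingleton (((Ext ℤ (ModuleCat.{0} R) n).obj (Opposite.op M)).obj N)

/-- `M` has flat dimension at most `n`. -/
def fdLE : ℕ → ModuleCat.{0} R → Prop
  | 0, M => IsFlatMod R M
  | n+1, M => ∃ (K F : ModuleCat.{0} R) (f : K ⟶ F) (g : F ⟶ M),
      IsFlatMod R F ∧ Function.Injective f ∧ Function.Surjective g ∧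
        Function.Exact f g ∧ fdLE n K

/-- `W` is `L_n`-injective: `Ext^1_R(M, W) = 0` for every `M` of flat dimension at most `n`. -/
def LnInj (n : ℕ) (W : ModuleCat.{0} R) : Prop :=
  ∀ M : ModuleCat.{0} R, fdLE R n M → extVanish R 1 M W

/-- `C` is cotorsion: `Ext^1_R(F, C) = 0` for every flat module `F`. -/
def Cotorsion (C : ModuleCat.{0} R) : Prop :=
  ∀ F : ModuleCat.{0} R, IsFlatMod R F → extVanish R 1 F C

/-- `Cosyzygy R m W W'` : `W'` is an `m`-th cosyzygy of `W`, i.e. there is an exact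
sequence `0 → W → E^0 → ⋯ → E^{m-1} → W' → 0` with all `E^i` injective. -/
def Cosyzygy : ℕ → ModuleCat.{0} R → ModuleCat.{0} R → Prop
  | 0, W, W' => ∃ e : W ⟶ W', Function.Bijective e
  | m+1, W, W' => ∃ (E C : ModuleCat.{0} R) (f : W ⟶ E) (g : E ⟶ C),
      Injective E ∧ Function.Injective f ∧ Function.Surjective g ∧
        Function.Exact f g ∧ Cosyzygy m C W'


/-!
`Ext¹(M, W) = 0` is used in its elementary form: every extension of `M` by `W` splits.

Induct on `n`. For `n + 1`, write `0 → D → E → W → 0` with `E` injective and `D` an `n`-th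
cosyzygy of `C`. By induction `Ext¹(K, D) = 0` whenever `fd K ≤ n`, so every map `K → W` lifts
to `E` and therefore extends along any embedding `K ↪ F`. Given `0 → K → F → M → 0` with `F`
flat and `fd K ≤ n`, this extension property splits every extension of `M` by `W` as soon as
`Ext¹(F, W) = 0`. The latter holds because syzygies of flat modules are flat (equational
criterion), so `W` is again cotorsion.
-/

universe u

variable {R}

namespace Function.Exact

variable {M N P X : Type*} [AddCommGroup M] [AddCommGroup N] [AddCommGroup P] [AddCommGroup X]
  [Module R M] [Module R N] [Module R P] [Module R X] {f : M →ₗ[R] N} {g : N →ₗ[R] P}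

theorem exists_desc (h : Function.Exact f g) (hg : Function.Surjective g)
    (t : N →ₗ[R] X) (ht : t ∘ₗ f = 0) : ∃ s : P →ₗ[R] X, s ∘ₗ g = t :=
  ⟨(LinearMap.range f).liftQ t (LinearMap.range_le_ker_iff.mpr ht) ∘ₗ
      (h.linearEquivOfSurjective hg).symm.toLinearMap, by ext x; simp⟩

theorem exists_lift (h : Function.Exact f g) (hf : Function.Injective f)
    (t : X →ₗ[R] N) (ht : g ∘ₗ t = 0) : ∃ s : X →ₗ[R] M, f ∘ₗ s = t :=
  ⟨(LinearEquiv.ofInjective f hf).symm.toLinearMap ∘ₗ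
      t.codRestrict (LinearMap.range f) (fun x => (h (t x)).mp (LinearMap.congr_fun ht x)),
    by ext x; simp; rfl⟩

end Function.Exact

theorem Module.exists_embedding_into_injective (W : Type u) [AddCommGroup W] [Module R W] :
    ∃ (I : Type u) (_ : AddCommGroup I) (_ : Module R I) (ι : W →ₗ[R] I),
      Module.Injective R I ∧ Function.Injective ι := by
  let I := Injective.under (ModuleCat.of R W)
  have : CategoryTheory.Injective (ModuleCat.of R I) := inferInstanceAs (CategoryTheory.Injective I)
  exact ⟨I, _, _, (Injective.ι (ModuleCat.of R W)).hom,
    Module.injective_module_of_injective_object R I,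
    (ModuleCat.mono_iff_injective _).mp inferInstance⟩

variable (R) in
def ExtensionsSplit (M W : Type u) [AddCommGroup M] [Module R M] [AddCommGroup W] [Module R W] :
    Prop :=
  ∀ (X : Type u) [AddCommGroup X] [Module R X] (i : W →ₗ[R] X) (p : X →ₗ[R] M),
    Function.Injective i → Function.Surjective p → Function.Exact i p →
      ∃ s : M →ₗ[R] X, p ∘ₗ s = LinearMap.id

namespace ExtensionsSplit

variable {K M W D E Q F P : Type u} [AddCommGroup K] [Module R K] [AddCommGroup M] [Module R M]
  [AddCommGroup W] [Module R W] [AddCommGroup D] [Module R D] [AddCommGroup E] [Module R E]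
  [AddCommGroup Q] [Module R Q] [AddCommGroup F] [Module R F] [AddCommGroup P] [Module R P]

theorem of_projective [Module.Projective R M] : ExtensionsSplit R M W :=
  fun _ _ _ _ p _ hp _ => Module.projective_lifting_property p LinearMap.id hp

theorem of_linearEquiv (h : ExtensionsSplit R M D) (e : D ≃ₗ[R] W) : ExtensionsSplit R M W :=
  fun X _ _ i p hi hp hip =>
    h X (i ∘ₗ e.toLinearMap) p (hi.comp e.injective) hp (e.precomp_exact_iff_exact.mpr hip)

/-- Split the pullback extension `0 → D → E ×_Q K → K → 0`. -/
theorem exists_lift (h : ExtensionsSplit R K D) {f : D →ₗ[R] E} {g : E →ₗ[R] Q}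
    (hf : Function.Injective f) (hg : Function.Surjective g) (hfg : Function.Exact f g)
    (ψ : K →ₗ[R] Q) : ∃ φ : K →ₗ[R] E, g ∘ₗ φ = ψ := by
  let Y := LinearMap.ker (g ∘ₗ LinearMap.fst R E K - ψ ∘ₗ LinearMap.snd R E K)
  have mem_Y {e : E} {k : K} : (e, k) ∈ Y ↔ g e = ψ k := by simp [Y, sub_eq_zero]
  let i : D →ₗ[R] Y := (LinearMap.inl R E K ∘ₗ f).codRestrict Y fun d => mem_Y.mpr <| by
    simpa using hfg.apply_apply_eq_zero d
  let q : Y →ₗ[R] K := LinearMap.snd R E K ∘ₗ Y.subtype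
  have hi : Function.Injective i := fun d d' hdd' =>
    hf (congrArg (fun y : Y => y.1.1) hdd')
  have hq : Function.Surjective q := fun k => by
    obtain ⟨e, he⟩ := hg (ψ k)
    exact ⟨⟨(e, k), mem_Y.mpr he⟩, rfl⟩
  have hiq : Function.Exact i q := by
    rintro ⟨⟨e, k⟩, hek⟩
    change k = 0 ↔ _
    constructor
    · rintro rfl
      obtain ⟨d, rfl⟩ := (hfg e).mp (by simpa using mem_Y.mp hek)
      exact ⟨d, rfl⟩
    · rintro ⟨d, hd⟩
      exact (congrArg (fun y : Y => y.1.2) hd).symm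
  obtain ⟨s, hs⟩ := h Y i q hi hq hiq
  refine ⟨LinearMap.fst R E K ∘ₗ Y.subtype ∘ₗ s, LinearMap.ext fun k => ?_⟩
  have hsk : g (s k).1.1 = ψ (s k).1.2 := mem_Y.mp (s k).2
  exact hsk.trans (congrArg ψ (LinearMap.congr_fun hs k))

/-- Embed `W` into an injective `I`: extend `ψ` into `I`, then use the splitting to correct the
extension by a map factoring through `g`, so that it lands in `W`. -/
theorem exists_extend (h : ExtensionsSplit R M W) {j : K →ₗ[R] F} {g : F →ₗ[R] M}
    (hj : Function.Injective j) (hg : Function.Surjective g) (hjg : Function.Exact j g)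
    (ψ : K →ₗ[R] W) : ∃ Ψ : F →ₗ[R] W, Ψ ∘ₗ j = ψ := by
  obtain ⟨I, _, _, ι, hI, hι⟩ := Module.exists_embedding_into_injective (R := R) W
  let π := (LinearMap.range ι).mkQ
  have hιπ : Function.Exact ι π := LinearMap.exact_map_mkQ_range ι
  obtain ⟨Φ, hΦ⟩ := hI.out j hj (ι ∘ₗ ψ)
  obtain ⟨μ, hμ⟩ := hjg.exists_desc hg (π ∘ₗ Φ) <| by
    ext k; simp [hΦ, π]
  obtain ⟨l, hl⟩ := h.exists_lift hι (Submodule.mkQ_surjective _) hιπ μ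
  obtain ⟨Ψ, hΨ⟩ := hιπ.exists_lift hι (Φ - l ∘ₗ g) <| by
    rw [LinearMap.comp_sub, ← LinearMap.comp_assoc, hl, hμ, sub_self]
  refine ⟨Ψ, LinearMap.ext fun k => hι ?_⟩
  have := LinearMap.congr_fun hΨ (j k)
  simp only [LinearMap.comp_apply, LinearMap.sub_apply, hΦ, hjg.apply_apply_eq_zero, map_zero,
    sub_zero] at this
  exact this

/-- Lift `g` to `t : F → X`; the defect of `t` on `K` lands in `W` and is extended to `F`, and the
corrected lift descends to a section `M → X`. -/
theorem of_exists_extend (hF : ExtensionsSplit R F W) {j : K →ₗ[R] F} {g : F →ₗ[R] M}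
    (hg : Function.Surjective g) (hjg : Function.Exact j g)
    (hext : ∀ ψ : K →ₗ[R] W, ∃ Ψ : F →ₗ[R] W, Ψ ∘ₗ j = ψ) : ExtensionsSplit R M W := by
  intro X _ _ i p hi hp hip
  obtain ⟨t, ht⟩ := hF.exists_lift hi hp hip g
  obtain ⟨ψ, hψ⟩ := hip.exists_lift hi (t ∘ₗ j) <| by
    rw [← LinearMap.comp_assoc, ht, hjg.linearMap_comp_eq_zero]
  obtain ⟨Ψ, hΨ⟩ := hext ψ
  obtain ⟨s, hs⟩ := hjg.exists_desc hg (t - i ∘ₗ Ψ) <| by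
    rw [LinearMap.sub_comp, LinearMap.comp_assoc, hΨ, hψ, sub_self]
  refine ⟨s, LinearMap.ext fun m => ?_⟩
  obtain ⟨x, rfl⟩ := hg m
  have := congrArg p (LinearMap.congr_fun hs x)
  simp only [LinearMap.comp_apply, LinearMap.sub_apply, map_sub, hip.apply_apply_eq_zero,
    sub_zero] at this
  rw [LinearMap.comp_apply, this, ← LinearMap.comp_apply p t, ht, LinearMap.id_apply]

theorem iff_exists_extend_of_projective [Module.Projective R P] {j : K →ₗ[R] P}
    {g : P →ₗ[R] M} (hj : Function.Injective j) (hg : Function.Surjective g)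
    (hjg : Function.Exact j g) :
    ExtensionsSplit R M W ↔ ∀ ψ : K →ₗ[R] W, ∃ Ψ : P →ₗ[R] W, Ψ ∘ₗ j = ψ :=
  ⟨fun h => h.exists_extend hj hg hjg, of_projective.of_exists_extend hg hjg⟩

theorem exists_extend_of_injective [Module.Injective R E] (h : ExtensionsSplit R K D)
    {f : D →ₗ[R] E} {g : E →ₗ[R] W} (hf : Function.Injective f) (hg : Function.Surjective g)
    (hfg : Function.Exact f g) {j : K →ₗ[R] F} (hj : Function.Injective j) (ψ : K →ₗ[R] W) :
    ∃ Ψ : F →ₗ[R] W, Ψ ∘ₗ j = ψ := by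
  obtain ⟨φ, hφ⟩ := h.exists_lift hf hg hfg ψ
  obtain ⟨Φ, hΦ⟩ := Module.Injective.out j hj φ
  exact ⟨g ∘ₗ Φ, by ext k; simp [hΦ, ← hφ]⟩

end ExtensionsSplit

section Presentation

variable {P₂ P₁ P₀ M W : Type u} [AddCommGroup P₂] [Module R P₂] [AddCommGroup P₁] [Module R P₁]
  [AddCommGroup P₀] [Module R P₀] [AddCommGroup M] [Module R M] [AddCommGroup W] [Module R W]
  {d₂ : P₂ →ₗ[R] P₁} {d₁ : P₁ →ₗ[R] P₀}

theorem forall_cocycle_iff_forall_exists_extend (h : Function.Exact d₂ d₁) :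
    (∀ φ : P₁ →ₗ[R] W, φ ∘ₗ d₂ = 0 → ∃ ψ : P₀ →ₗ[R] W, ψ ∘ₗ d₁ = φ) ↔
      ∀ ψ : LinearMap.range d₁ →ₗ[R] W, ∃ Ψ : P₀ →ₗ[R] W,
        Ψ ∘ₗ (LinearMap.range d₁).subtype = ψ := by
  have hd : Function.Exact d₂ d₁.rangeRestrict := fun x => by
    simpa [Subtype.ext_iff] using h x
  constructor
  · intro H ψ
    obtain ⟨Ψ, hΨ⟩ := H (ψ ∘ₗ d₁.rangeRestrict) <| by
      rw [LinearMap.comp_assoc, hd.linearMap_comp_eq_zero, LinearMap.comp_zero]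
    refine ⟨Ψ, LinearMap.ext ?_⟩
    rintro ⟨_, x, rfl⟩
    exact LinearMap.congr_fun hΨ x
  · intro H φ hφ
    obtain ⟨ψ, rfl⟩ := hd.exists_desc d₁.surjective_rangeRestrict φ hφ
    obtain ⟨Ψ, rfl⟩ := H ψ
    exact ⟨Ψ, rfl⟩

theorem extensionsSplit_iff_forall_cocycle [Module.Projective R P₀] {π : P₀ →ₗ[R] M}
    (hπ : Function.Surjective π) (h₁ : Function.Exact d₁ π) (h₂ : Function.Exact d₂ d₁) :
    ExtensionsSplit R M W ↔
      ∀ φ : P₁ →ₗ[R] W, φ ∘ₗ d₂ = 0 → ∃ ψ : P₀ →ₗ[R] W, ψ ∘ₗ d₁ = φ := by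
  rw [forall_cocycle_iff_forall_exists_extend h₂]
  exact ExtensionsSplit.iff_exists_extend_of_projective Subtype.val_injective hπ
    fun x => (h₁ x).trans (by simp)

end Presentation

theorem extVanish_one_iff_extensionsSplit (M W : ModuleCat.{0} R) :
    extVanish R 1 M W ↔ ExtensionsSplit R M W := by
  obtain ⟨P⟩ := HasProjectiveResolution.out (Z := M)
  let π : P.complex.X 0 →ₗ[R] M := (P.π.f 0).hom
  have hπ : Function.Surjective π := (ModuleCat.epi_iff_surjective _).mp inferInstance
  have h₁ : Function.Exact (P.complex.d 1 0).hom π :=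
    (ShortComplex.ShortExact.moduleCat_exact_iff_function_exact _).mp P.exact₀
  have h₂ : Function.Exact (P.complex.d 2 1).hom (P.complex.d 1 0).hom :=
    (ShortComplex.ShortExact.moduleCat_exact_iff_function_exact _).mp (P.exact_succ 0)
  rw [extensionsSplit_iff_forall_cocycle hπ h₁ h₂, extVanish, ← ModuleCat.isZero_iff_subsingleton,
    (P.isoExt 1 W).isZero_iff, ← HomologicalComplex.exactAt_iff_isZero_homology,
    HomologicalComplex.exactAt_iff' _ 0 1 2 (by simp) (by simp),
    ShortComplex.moduleCat_exact_iff]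
  refine ⟨fun H φ hφ => ?_, fun H φ hφ => ?_⟩
  · obtain ⟨ψ, hψ⟩ := H (ModuleCat.ofHom φ) (ModuleCat.hom_ext hφ)
    exact ⟨ψ.hom, congrArg ModuleCat.Hom.hom hψ⟩
  · obtain ⟨ψ, hψ⟩ := H φ.hom (congrArg ModuleCat.Hom.hom hφ)
    exact ⟨ModuleCat.ofHom ψ, ModuleCat.hom_ext hψ⟩

section Flat

variable {M P F : Type} [AddCommGroup M] [Module R M] [AddCommGroup P] [Module R P]
  [AddCommGroup F] [Module R F]

theorem sum_smul_sum_smul {κ ν : Type*} [Fintype κ] [Fintype ν] (a : κ → R) (B : Matrix κ ν R)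
    (z : ν → M) : ∑ j, a j • ∑ l, B j l • z l = ∑ l, (∑ j, a j * B j l) • z l := by
  simp only [Finset.smul_sum, Finset.sum_smul, mul_smul]
  exact Finset.sum_comm

theorem isFlatMod_of_subsingleton [Subsingleton M] : IsFlatMod R M :=
  fun _ _ _ _ _ => ⟨Empty, inferInstance, fun _ => Empty.elim, Empty.elim,
    fun _ => Subsingleton.elim _ _, fun j => j.elim⟩

theorem isFlatMod_finsupp (X : Type) : IsFlatMod R (X →₀ R) := by
  classical
  intro ι _ r u hu
  let T := Finset.univ.biUnion fun i => (u i).support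
  refine ⟨T, inferInstance, fun i t => u i t, fun t => Finsupp.single t 1, fun i => ?_, fun t => ?_⟩
  · ext x
    simp only [Finsupp.finsetSum_apply, Finsupp.smul_apply, Finsupp.single_apply, smul_eq_mul,
      mul_ite, mul_one, mul_zero]
    rw [Finset.sum_coe_sort T (fun t => if t = x then u i t else 0), Finset.sum_ite_eq']
    split_ifs with hx
    · rfl
    · by_contra hne
      exact hx (Finset.mem_biUnion.mpr ⟨i, Finset.mem_univ i, Finsupp.mem_support_iff.mpr
        hne⟩)
  · simpa using congrArg (fun v : X →₀ R => v t) hu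

theorem IsFlatMod.exists_factorization (hM : IsFlatMod R M) {ι κ : Type} [Fintype ι]
    [Fintype κ] (A : Matrix ι κ R) (x : κ → M) (hx : ∀ i, ∑ j, A i j • x j = 0) :
    ∃ (ν : Type) (_ : Fintype ν) (B : Matrix κ ν R) (z : ν → M),
      (∀ j, x j = ∑ l, B j l • z l) ∧ A * B = 0 := by
  classical
  suffices H : ∀ s : Finset ι, ∃ (ν : Type) (_ : Fintype ν) (B : Matrix κ ν R) (z : ν → M),
      (∀ j, x j = ∑ l, B j l • z l) ∧ ∀ i ∈ s, (A * B) i = 0 by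
    obtain ⟨ν, _, B, z, hxB, hAB⟩ := H Finset.univ
    exact ⟨ν, inferInstance, B, z, hxB, funext fun i => hAB i (Finset.mem_univ i)⟩
  intro s
  induction s using Finset.induction_on with
  | empty => exact ⟨κ, inferInstance, 1, x, fun j => by simp [Matrix.one_apply], by simp⟩
  | insert a s _ ih =>
    obtain ⟨ν, _, B, y, hxy, hAB⟩ := ih
    have hy : ∑ l, (A * B) a l • y l = 0 := by
      rw [← hx a]
      simp only [hxy, sum_smul_sum_smul, Matrix.mul_apply]
    obtain ⟨μ, _, C, z, hyz, hABC⟩ := hM ν inferInstance ((A * B) a) y hy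
    refine ⟨μ, inferInstance, B * Matrix.of C, z, fun j => ?_, fun i hi => ?_⟩
    · rw [hxy j]
      simp only [hyz, Matrix.mul_apply]
      exact sum_smul_sum_smul (B j) (Matrix.of C) z
    · rw [← Matrix.mul_assoc]
      obtain rfl | hi := Finset.mem_insert.mp hi
      · exact funext hABC
      · ext m
        rw [Matrix.mul_apply, hAB i hi]
        simp

theorem IsFlatMod.ker_of_surjective (hP : IsFlatMod R P) (hF : IsFlatMod R F) {g : P →ₗ[R] F}
    (hg : Function.Surjective g) : IsFlatMod R (LinearMap.ker g) := by
  intro ι _ r u hu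
  obtain ⟨κ, _, a, y, huy, hra⟩ := hP ι inferInstance r (fun i => u i) <| by
    simpa using congrArg Subtype.val hu
  obtain ⟨ν, _, B, z, hyz, haB⟩ := hF.exists_factorization a (fun j => g (y j)) fun i => by
    simpa [huy i] using (u i).2
  choose w hw using fun l => hg (z l)
  let y' : κ → LinearMap.ker g := fun j => ⟨y j - ∑ l, B j l • w l, by simp [hw, hyz j]⟩
  refine ⟨κ, inferInstance, a, y', fun i => Subtype.ext ?_, hra⟩
  have hrow : ∀ l, ∑ j, a i j * B j l = 0 := fun l =>
    Matrix.mul_apply.symm.trans (congrFun (congrFun haB i) l)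
  simp [y', smul_sub, Finset.sum_sub_distrib, sum_smul_sum_smul, hrow, ← huy i]

end Flat

theorem fdLE_of_isFlatMod {M : ModuleCat.{0} R} (hM : IsFlatMod R M) : ∀ n, fdLE R n M
  | 0 => hM
  | n + 1 => ⟨ModuleCat.of R PUnit, M, 0, 𝟙 M, hM, fun _ _ _ => Subsingleton.elim _ _,
      fun m => ⟨m, rfl⟩, (LinearMap.exact_zero_iff_injective _ LinearMap.id).mpr fun _ _ => id,
      fdLE_of_isFlatMod isFlatMod_of_subsingleton n⟩

theorem Cosyzygy.exists_last_step {m : ℕ} {C W : ModuleCat.{0} R} (h : Cosyzygy R (m + 1) C W) :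
    ∃ (D E : ModuleCat.{0} R) (f : D ⟶ E) (g : E ⟶ W), Cosyzygy R m C D ∧ Injective E ∧
      Function.Injective f ∧ Function.Surjective g ∧ Function.Exact f g := by
  induction m generalizing C with
  | zero =>
    obtain ⟨E, C₁, f, g, hE, hf, hg, hfg, e, he⟩ := h
    exact ⟨C, E, f, g ≫ e, ⟨𝟙 C, Function.bijective_id⟩, hE, hf, he.2.comp hg,
      hfg.comp_injective _ he.1 (map_zero e.hom)⟩
  | succ m ih =>
    obtain ⟨E, C₁, f, g, hE, hf, hg, hfg, h⟩ := h
    obtain ⟨D, E', f', g', hD, hE', hf', hg', hfg'⟩ := ih h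
    exact ⟨D, E', f', g', ⟨E, C₁, f, g, hE, hf, hg, hfg, hD⟩, hE', hf', hg', hfg'⟩

/-- Cosyzygies of cotorsion modules are cotorsion: resolve a flat `F` by a free module, whose
kernel is again flat. -/
theorem IsFlatMod.extensionsSplit_of_injective {F : Type} [AddCommGroup F] [Module R F]
    (hF : IsFlatMod R F) {D E W : Type} [AddCommGroup D] [Module R D] [AddCommGroup E]
    [Module R E] [AddCommGroup W] [Module R W] [Module.Injective R E]
    (hD : ∀ K : ModuleCat.{0} R, IsFlatMod R K → ExtensionsSplit R K D) {f : D →ₗ[R] E}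
    {g : E →ₗ[R] W} (hf : Function.Injective f) (hg : Function.Surjective g)
    (hfg : Function.Exact f g) : ExtensionsSplit R F W := by
  let π := Finsupp.linearCombination R (id : F → F)
  have hπ : Function.Surjective π := fun x => ⟨Finsupp.single x 1, by simp [π]⟩
  have hK := (isFlatMod_finsupp F).ker_of_surjective hF hπ
  exact ExtensionsSplit.of_projective.of_exists_extend hπ (LinearMap.exact_subtype_ker_map π)
    fun ψ => (hD (.of R _) hK).exists_extend_of_injective hf hg hfg Subtype.val_injective ψ

theorem extensionsSplit_of_cosyzygy {C : ModuleCat.{0} R}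
    (hC : ∀ F : ModuleCat.{0} R, IsFlatMod R F → ExtensionsSplit R F C) :
    ∀ {n : ℕ} {W M : ModuleCat.{0} R}, Cosyzygy R n C W → fdLE R n M → ExtensionsSplit R M W
  | 0, _, M, ⟨e, he⟩, hM => (hC M hM).of_linearEquiv (LinearEquiv.ofBijective e.hom he)
  | n + 1, W, _, hW, ⟨_, F, _, _, hF, hj, hp, hjp, hK⟩ => by
    obtain ⟨D, E, f, g, hD, hE, hf, hg, hfg⟩ := hW.exists_last_step
    have := Module.injective_module_of_injective_object R E
    have hDsplit {K : ModuleCat.{0} R} (hK : fdLE R n K) : ExtensionsSplit R K D :=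
      extensionsSplit_of_cosyzygy hC hD hK
    have hFW : ExtensionsSplit R F W :=
      hF.extensionsSplit_of_injective (fun K hK => hDsplit (fdLE_of_isFlatMod hK n)) hf hg hfg
    exact hFW.of_exists_extend hp hjp fun ψ =>
      (hDsplit hK).exists_extend_of_injective hf hg hfg hj ψ

/-- If `C` is cotorsion and `W` is an `n`-th cosyzygy of `C`, then `W` is `L_n`-injective. -/
theorem stmt7 (n : ℕ) (C W : ModuleCat.{0} R)
    (hC : Cotorsion R C) (hcs : Cosyzygy R n C W) :
    LnInj R n W := fun M hM =>
  (extVanish_one_iff_extensionsSplit M W).mpr <| extensionsSplit_of_cosyzygy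
    (fun F hF => (extVanish_one_iff_extensionsSplit F C).mp (hC F hF)) hcs hM
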